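/- arXiv:1210.7359 — 4 statements merged into one kernel-verified Lean document; each statement's English description precedes it below -/
import Mathlib

section
/- For every $r \ge 1$ and $\alpha > 0$ there exists $n_0$ such that for every $r$-uniform hypergraph $F = (V,E)$ on $n \ge n_0$ vertices with edge density $\rho = |E|/\binom{n}{r} \in [\alpha, 1-\alpha]$, one has $\sum_{\{v,v'\} \in \binom{V}{2}} |D_F(v,v')| \ge \alpha(1-\alpha)\binom{n}{r+1}$. -/
/-!
Write `k(S)` for the number of facets `S - x` of a set `S` that are edges of `F`. Inside an
`(r+1)`-set `S` exactly `2 k(S) (r + 1 - k(S))` ordered pairs `(v, v')` have `S ∈ D_F(v, v')`,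
so the sum in the theorem is `W_r(F) = ∑_S k(S) (r + 1 - k(S))` (`boundary r univ F`), and we show
`ρ(1-ρ) C(n, r+1) ≤ W_r(F)` by induction on `r`. The links `F_v` satisfy
`∑_v W_{r-1}(F_v) = (r - 1) W_r(F)`, so the induction hypothesis bounds `(r - 1) W_r(F)` below by
`∑_v ρ_v (1 - ρ_v) C(n-1, r)`, where `ρ_v` is the density of `F_v`. This misses the claim by a
multiple of the variance of the degrees, and `|d(x) - d(y)| ≤ |D_F(x, y)|` bounds that variance by
`W_r(F)` as well.
-/

open Finset

namespace Finset

variable {V : Type*} [DecidableEq V]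

lemma sum_offDiag_sub_sq {ι R : Type*} [DecidableEq ι] [CommRing R] (s : Finset ι)
    (f : ι → R) :
    ∑ q ∈ s.offDiag, (f q.1 - f q.2) ^ 2 = 2 * (#s * ∑ i ∈ s, f i ^ 2 - (∑ i ∈ s, f i) ^ 2) := by
  have hdiag : ∑ q ∈ s ×ˢ s, (f q.1 - f q.2) ^ 2 = ∑ q ∈ s.offDiag, (f q.1 - f q.2) ^ 2 := by
    rw [← diag_union_offDiag, sum_union (disjoint_diag_offDiag s), add_eq_right]
    exact sum_eq_zero fun q hq => by rw [(mem_diag.mp hq).2, sub_self, sq, zero_mul]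
  rw [← hdiag, sum_product]
  simp only [sub_sq, sum_add_distrib, sum_sub_distrib, sum_const, nsmul_eq_mul, ← mul_sum,
    ← sum_mul, mul_assoc]
  ring

lemma card_filter_le_card_filter_add_card_filter {α : Type*} [DecidableEq α] (s : Finset α)
    {p q r : α → Prop} [DecidablePred p] [DecidablePred q] [DecidablePred r]
    (h : ∀ a ∈ s, p a → q a ∨ r a) : #{a ∈ s | p a} ≤ #{a ∈ s | q a} + #{a ∈ s | r a} := by
  refine (card_le_card fun a ha => ?_).trans (card_union_le _ _)
  rw [mem_filter] at ha
  simpa [mem_union, mem_filter, ha.1] using h a ha.1 ha.2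

lemma card_offDiag_filter_not_iff {A S : Finset V} (hSA : S ⊆ A) (p : V → Prop)
    [DecidablePred p] :
    #{q ∈ A.offDiag | q.1 ∈ S ∧ q.2 ∈ S ∧ ¬(p q.1 ↔ p q.2)}
      = 2 * #{x ∈ S | p x} * #{x ∈ S | ¬p x} := by
  have hsplit : {q ∈ A.offDiag | q.1 ∈ S ∧ q.2 ∈ S ∧ ¬(p q.1 ↔ p q.2)}
      = {x ∈ S | p x} ×ˢ {x ∈ S | ¬p x} ∪ {x ∈ S | ¬p x} ×ˢ {x ∈ S | p x} := by
    ext ⟨x, y⟩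
    simp only [mem_filter, mem_offDiag, mem_union, mem_product]
    by_cases hxy : x = y
    · subst hxy; tauto
    · have := @hSA x; have := @hSA y; tauto
  have hdisj : Disjoint ({x ∈ S | p x} ×ˢ {x ∈ S | ¬p x}) ({x ∈ S | ¬p x} ×ˢ {x ∈ S | p x}) :=
    disjoint_product.mpr (Or.inl (disjoint_filter_filter_not S S p))
  rw [hsplit, card_union_of_disjoint hdisj, card_product, card_product]
  ring

lemma sum_sum_powersetCard_erase {M : Type*} [AddCommMonoid M] (A : Finset V) (k : ℕ)
    (f : V → Finset V → M) :
    ∑ v ∈ A, ∑ S ∈ (A.erase v).powersetCard k, f v S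
      = ∑ S ∈ A.powersetCard (k + 1), ∑ v ∈ S, f v (S.erase v) := by
  rw [sum_sigma', sum_sigma']
  refine sum_nbij' (fun p => ⟨insert p.1 p.2, p.1⟩) (fun q => ⟨q.2, q.1.erase q.2⟩)
    ?_ ?_ ?_ ?_ ?_
  · rintro ⟨v, S⟩ h
    simp only [mem_sigma, mem_powersetCard, subset_erase] at h ⊢
    exact ⟨⟨insert_subset h.1 h.2.1.1, by rw [card_insert_of_notMem h.2.1.2, h.2.2]⟩,
      mem_insert_self v S⟩
  · rintro ⟨S, v⟩ h
    simp only [mem_sigma, mem_powersetCard] at h ⊢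
    exact ⟨h.1.1 h.2, erase_subset_erase v h.1.1, by rw [card_erase_of_mem h.2, h.1.2]; rfl⟩
  · rintro ⟨v, S⟩ h
    simp only [mem_sigma, mem_powersetCard, subset_erase] at h
    simp [erase_insert h.2.1.2]
  · rintro ⟨S, v⟩ h
    simp [insert_erase (mem_sigma.mp h).2]
  · rintro ⟨v, S⟩ h
    simp only [mem_sigma, mem_powersetCard, subset_erase] at h
    simp [erase_insert h.2.1.2]

end Finset

namespace UniformHypergraph

variable {V : Type*} [DecidableEq V]

def facetCount (E : Finset (Finset V)) (S : Finset V) : ℕ := #{x ∈ S | S.erase x ∈ E}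

def degree (E : Finset (Finset V)) (v : V) : ℕ := #{e ∈ E | v ∈ e}

def link (E : Finset (Finset V)) (v : V) : Finset (Finset V) := {e ∈ E | v ∈ e}.image (·.erase v)

noncomputable def boundary (u : ℕ) (A : Finset V) (E : Finset (Finset V)) : ℝ :=
  ∑ S ∈ A.powersetCard (u + 1), (facetCount E S : ℝ) * (u + 1 - facetCount E S)

lemma facetCount_le_card (E : Finset (Finset V)) (S : Finset V) : facetCount E S ≤ #S :=
  card_filter_le _ _

lemma boundary_nonneg (u : ℕ) (A : Finset V) (E : Finset (Finset V)) : 0 ≤ boundary u A E := by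
  refine sum_nonneg fun S hS => mul_nonneg (Nat.cast_nonneg _) (sub_nonneg.mpr ?_)
  exact_mod_cast (mem_powersetCard.mp hS).2 ▸ facetCount_le_card E S

lemma mem_link {E : Finset (Finset V)} {v : V} {e : Finset V} :
    e ∈ link E v ↔ v ∉ e ∧ insert v e ∈ E := by
  simp only [link, mem_image, mem_filter]
  constructor
  · rintro ⟨f, ⟨hf, hvf⟩, rfl⟩
    exact ⟨notMem_erase v f, by rwa [insert_erase hvf]⟩
  · rintro ⟨hve, he⟩
    exact ⟨insert v e, ⟨he, mem_insert_self v e⟩, erase_insert hve⟩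

lemma card_link (E : Finset (Finset V)) (v : V) : #(link E v) = degree E v :=
  card_image_of_injOn fun e he f hf hef => by
    simp only [coe_filter, Set.mem_ofPred_eq] at he hf
    rw [← insert_erase he.2, ← insert_erase hf.2]
    exact congrArg (insert v) hef

lemma link_subset_powersetCard {A : Finset V} {E : Finset (Finset V)} {u : ℕ}
    (hE : E ⊆ A.powersetCard (u + 1)) (v : V) : link E v ⊆ (A.erase v).powersetCard u := by
  intro e he
  obtain ⟨hve, he⟩ := mem_link.mp he
  obtain ⟨hsub, hcard⟩ := mem_powersetCard.mp (hE he)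
  rw [card_insert_of_notMem hve] at hcard
  exact mem_powersetCard.mpr ⟨fun x hx => mem_erase.mpr
    ⟨fun hxv => hve (hxv ▸ hx), hsub (mem_insert_of_mem hx)⟩, by omega⟩

lemma degree_le_choose {A : Finset V} {E : Finset (Finset V)} {u : ℕ}
    (hE : E ⊆ A.powersetCard (u + 1)) {v : V} (hv : v ∈ A) :
    degree E v ≤ (#A - 1).choose u := by
  simpa [card_link, card_erase_of_mem hv] using card_le_card (link_subset_powersetCard hE v)

lemma facetCount_eq_facetCount_link_add {E : Finset (Finset V)} {v : V} {S : Finset V}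
    (hv : v ∈ S) :
    facetCount E S = facetCount (link E v) (S.erase v) + if S.erase v ∈ E then 1 else 0 := by
  simp only [facetCount, card_filter, ← add_sum_erase S _ hv, add_comm (ite _ _ _)]
  refine congrArg (· + _) (sum_congr rfl fun w hw => ?_)
  have hwv : w ≠ v := ne_of_mem_erase hw
  have hinsert : insert v ((S.erase v).erase w) = S.erase w := by
    rw [erase_right_comm, insert_erase (mem_erase.mpr ⟨hwv.symm, hv⟩)]
  simp [mem_link, hinsert]

lemma sum_facetCount_link_mul {E : Finset (Finset V)} {c : ℕ} {S : Finset V}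
    (hS : #S = c + 2) :
    ∑ v ∈ S, (facetCount (link E v) (S.erase v) : ℝ) * (c + 1 - facetCount (link E v) (S.erase v))
      = c * ((facetCount E S : ℝ) * (c + 2 - facetCount E S)) := by
  set K : ℝ := (facetCount E S : ℝ)
  have hK : ∑ v ∈ S, (if S.erase v ∈ E then 1 else 0 : ℝ) = K := by
    rw [sum_boole]; rfl
  have hterm : ∀ v ∈ S,
      (facetCount (link E v) (S.erase v) : ℝ) * (c + 1 - facetCount (link E v) (S.erase v))
        = K * (c + 1 - K) + (if S.erase v ∈ E then 1 else 0) * (2 * K - (c + 2)) := by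
    intro v hv
    have h := facetCount_eq_facetCount_link_add (E := E) hv
    split_ifs at h ⊢ <;> simp only [K, h] <;> push_cast <;> ring
  rw [sum_congr rfl hterm, sum_add_distrib, sum_const, ← sum_mul, hK, hS, nsmul_eq_mul]
  push_cast
  ring

lemma sum_boundary_link (E : Finset (Finset V)) (c : ℕ) (A : Finset V) :
    ∑ v ∈ A, boundary c (A.erase v) (link E v) = c * boundary (c + 1) A E := by
  simp only [boundary, sum_sum_powersetCard_erase, mul_sum]
  refine sum_congr rfl fun S hS => ?_
  rw [sum_facetCount_link_mul (mem_powersetCard.mp hS).2]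
  push_cast
  ring

lemma sum_offDiag_card_eq_two_mul_boundary (E : Finset (Finset V)) (u : ℕ) (A : Finset V) :
    ∑ q ∈ A.offDiag, (#{S ∈ A.powersetCard (u + 1) |
        q.1 ∈ S ∧ q.2 ∈ S ∧ ¬(S.erase q.1 ∈ E ↔ S.erase q.2 ∈ E)} : ℝ)
      = 2 * boundary u A E := by
  have hswap := sum_card_bipartiteAbove_eq_sum_card_bipartiteBelow (s := A.offDiag)
    (t := A.powersetCard (u + 1))
    (fun q S => q.1 ∈ S ∧ q.2 ∈ S ∧ ¬(S.erase q.1 ∈ E ↔ S.erase q.2 ∈ E))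
  simp only [bipartiteAbove, bipartiteBelow] at hswap
  rw [← Nat.cast_sum, hswap, boundary, mul_sum, Nat.cast_sum]
  refine sum_congr rfl fun S hS => ?_
  obtain ⟨hSA, hcard⟩ := mem_powersetCard.mp hS
  have hout : (#{x ∈ S | S.erase x ∉ E} : ℝ) = u + 1 - facetCount E S := by
    rw [eq_sub_iff_add_eq, facetCount, ← Nat.cast_add, add_comm,
      card_filter_add_card_filter_not, hcard, Nat.cast_succ]
  rw [card_offDiag_filter_not_iff hSA (S.erase · ∈ E)]
  push_cast
  rw [hout, facetCount]
  ring

lemma card_filter_erase_mem {A : Finset V} {E : Finset (Finset V)} {k : ℕ}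
    (hE : E ⊆ A.powersetCard k) {x y : V} (hy : y ∈ A) (hxy : x ≠ y) :
    #{S ∈ A.powersetCard (k + 1) | x ∈ S ∧ y ∈ S ∧ S.erase y ∈ E}
      = #{e ∈ E | x ∈ e ∧ y ∉ e} := by
  refine card_nbij' (·.erase y) (insert y) ?_ ?_ ?_ ?_
  · intro S hS
    simp only [coe_filter, Set.mem_ofPred_eq] at hS ⊢
    exact ⟨hS.2.2.2, mem_erase.mpr ⟨hxy, hS.2.1⟩, notMem_erase y S⟩
  · intro e he
    simp only [coe_filter, Set.mem_ofPred_eq] at he ⊢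
    obtain ⟨hsub, hcard⟩ := mem_powersetCard.mp (hE he.1)
    refine ⟨mem_powersetCard.mpr ⟨insert_subset hy hsub, ?_⟩, mem_insert_of_mem he.2.1,
      mem_insert_self y e, by rw [erase_insert he.2.2]; exact he.1⟩
    rw [card_insert_of_notMem he.2.2, hcard]
  · intro S hS
    simp only [coe_filter, Set.mem_ofPred_eq] at hS
    exact insert_erase hS.2.2.1
  · intro e he
    simp only [coe_filter, Set.mem_ofPred_eq] at he
    exact erase_insert he.2.2

lemma degree_eq_add (E : Finset (Finset V)) (x y : V) :
    degree E x = #{e ∈ E | x ∈ e ∧ y ∈ e} + #{e ∈ E | x ∈ e ∧ y ∉ e} := by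
  rw [degree, ← filter_filter, ← filter_filter, card_filter_add_card_filter_not]

lemma abs_degree_sub_degree_le {A : Finset V} {E : Finset (Finset V)} {k : ℕ}
    (hE : E ⊆ A.powersetCard k) {x y : V} (hx : x ∈ A) (hy : y ∈ A) (hxy : x ≠ y) :
    |(degree E x : ℝ) - degree E y|
      ≤ #{S ∈ A.powersetCard (k + 1) | x ∈ S ∧ y ∈ S ∧ ¬(S.erase x ∈ E ↔ S.erase y ∈ E)} := by
  have hx' := card_filter_erase_mem hE hy hxy
  have hy' := card_filter_erase_mem hE hx hxy.symm
  have hxy' := card_filter_le_card_filter_add_card_filter (A.powersetCard (k + 1))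
    (p := fun S => x ∈ S ∧ y ∈ S ∧ S.erase y ∈ E) (q := fun S => y ∈ S ∧ x ∈ S ∧ S.erase x ∈ E)
    (r := fun S => x ∈ S ∧ y ∈ S ∧ ¬(S.erase x ∈ E ↔ S.erase y ∈ E)) (fun _ _ => by tauto)
  have hyx' := card_filter_le_card_filter_add_card_filter (A.powersetCard (k + 1))
    (p := fun S => y ∈ S ∧ x ∈ S ∧ S.erase x ∈ E) (q := fun S => x ∈ S ∧ y ∈ S ∧ S.erase y ∈ E)
    (r := fun S => x ∈ S ∧ y ∈ S ∧ ¬(S.erase x ∈ E ↔ S.erase y ∈ E)) (fun _ _ => by tauto)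
  have hcommon : #{e ∈ E | y ∈ e ∧ x ∈ e} = #{e ∈ E | x ∈ e ∧ y ∈ e} := by
    simp only [and_comm]
  rw [abs_sub_le_iff, degree_eq_add E x y, degree_eq_add E y x, hcommon]
  rw [hx', hy'] at hxy' hyx'
  push_cast
  constructor
  · rw [add_sub_add_left_eq_sub, sub_le_iff_le_add']; exact_mod_cast hxy'
  · rw [add_sub_add_left_eq_sub, sub_le_iff_le_add']; exact_mod_cast hyx'

lemma sum_degree {A : Finset V} {E : Finset (Finset V)} {u : ℕ} (hE : E ⊆ A.powersetCard u) :
    ∑ v ∈ A, degree E v = u * #E := by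
  have := sum_card_bipartiteAbove_eq_sum_card_bipartiteBelow (s := A) (t := E) (· ∈ ·)
  simp only [bipartiteAbove, bipartiteBelow, filter_mem_eq_inter] at this
  simp only [degree, this]
  rw [sum_congr rfl fun e he => by rw [inter_eq_right.mpr (mem_powersetCard.mp (hE he)).1,
    (mem_powersetCard.mp (hE he)).2], sum_const, smul_eq_mul, mul_comm]

lemma card_mul_sum_degree_sq_sub_sq_le {A : Finset V} {E : Finset (Finset V)} {u : ℕ}
    (hE : E ⊆ A.powersetCard (u + 1)) :
    #A * ∑ v ∈ A, (degree E v : ℝ) ^ 2 - (∑ v ∈ A, (degree E v : ℝ)) ^ 2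
      ≤ ((#A - 1).choose u : ℕ) * boundary (u + 1) A E := by
  set C : ℝ := ↑((#A - 1).choose u)
  have hpair : ∀ q ∈ A.offDiag, ((degree E q.1 : ℝ) - degree E q.2) ^ 2
      ≤ C * #{S ∈ A.powersetCard (u + 1 + 1) |
          q.1 ∈ S ∧ q.2 ∈ S ∧ ¬(S.erase q.1 ∈ E ↔ S.erase q.2 ∈ E)} := by
    intro q hq
    obtain ⟨hx, hy, hxy⟩ := mem_offDiag.mp hq
    have hbound : ∀ v ∈ A, (degree E v : ℝ) ≤ C := fun v hv => by
      simp only [C]; exact_mod_cast degree_le_choose hE hv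
    have hC : |(degree E q.1 : ℝ) - degree E q.2| ≤ C :=
      abs_sub_le_of_nonneg_of_le (Nat.cast_nonneg _) (hbound _ hx) (Nat.cast_nonneg _) (hbound _ hy)
    rw [← sq_abs, sq]
    exact mul_le_mul hC (abs_degree_sub_degree_le hE hx hy hxy) (abs_nonneg _)
      ((abs_nonneg _).trans hC)
  have hsum := sum_le_sum hpair
  rw [sum_offDiag_sub_sq A (fun v => (degree E v : ℝ)), ← mul_sum,
    sum_offDiag_card_eq_two_mul_boundary] at hsum
  linarith

lemma density_bound_of_link_and_variance {N D U W S P c : ℝ} (hN : 0 < N) (hD : 0 < D)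
    (hW : 0 ≤ W) (hc : 0 ≤ c) (hU : 0 ≤ U) (hUD : U ≤ N * D)
    (hlink : (S * D - P) * U ≤ c * W * D ^ 2) (hvar : N * P - S ^ 2 ≤ D * W) :
    S / (N * D) * (1 - S / (N * D)) * (N * U / (c + 2)) ≤ W := by
  have hsplit : S / (N * D) * (1 - S / (N * D)) * (N * U)
      = (S * D - P) * U / D ^ 2 + (N * P - S ^ 2) * U / (N * D ^ 2) := by
    field_simp
    ring
  have h1 : (S * D - P) * U / D ^ 2 ≤ c * W := by
    rw [div_le_iff₀ (by positivity)]; linarith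
  have h2 : (N * P - S ^ 2) * U / (N * D ^ 2) ≤ W := by
    rw [div_le_iff₀ (by positivity)]
    nlinarith [mul_le_mul_of_nonneg_right hvar hU,
      mul_le_mul_of_nonneg_left hUD (mul_nonneg hD.le hW)]
  rw [← mul_div_assoc, div_le_iff₀ (by positivity), hsplit]
  nlinarith

lemma sum_degree_mul_sub_sq_le_of_links {A : Finset V} {E : Finset (Finset V)} {c : ℕ}
    {D U : ℝ} (hD : 0 < D)
    (hlinks : ∀ v ∈ A, (degree E v : ℝ) / D * (1 - degree E v / D) * U
      ≤ boundary c (A.erase v) (link E v)) :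
    ((∑ v ∈ A, (degree E v : ℝ)) * D - ∑ v ∈ A, (degree E v : ℝ) ^ 2) * U
      ≤ c * boundary (c + 1) A E * D ^ 2 := by
  have hterm : ∀ v ∈ A, ((degree E v : ℝ) * D - (degree E v : ℝ) ^ 2) * U
      ≤ boundary c (A.erase v) (link E v) * D ^ 2 := fun v hv =>
    calc ((degree E v : ℝ) * D - (degree E v : ℝ) ^ 2) * U
        = degree E v / D * (1 - degree E v / D) * U * D ^ 2 := by field_simp
      _ ≤ _ := mul_le_mul_of_nonneg_right (hlinks v hv) (sq_nonneg D)
  have h := sum_le_sum hterm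
  rwa [← sum_mul A _ (D ^ 2), sum_boundary_link, ← sum_mul A _ U, sum_sub_distrib,
    ← sum_mul A _ D] at h

theorem density_mul_choose_le_boundary (u : ℕ) (A : Finset V) (E : Finset (Finset V))
    (hE : E ⊆ A.powersetCard u) :
    (#E : ℝ) / (#A).choose u * (1 - #E / (#A).choose u) * (#A).choose (u + 1)
      ≤ boundary u A E := by
  induction u generalizing A E with
  | zero =>
    have hE1 : #E ≤ 1 := by simpa using card_le_card hE
    interval_cases #E <;> simp [boundary_nonneg]
  | succ c ih =>
    rcases lt_or_ge (#A) (c + 2) with hsmall | hlarge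
    · simp [Nat.choose_eq_zero_of_lt hsmall, boundary_nonneg]
    obtain ⟨m, hm⟩ : ∃ m, #A = m + 1 := ⟨#A - 1, by omega⟩
    set D : ℝ := ↑(m.choose c)
    set U : ℝ := ↑(m.choose (c + 1))
    have hD : 0 < D := by simp only [D]; exact_mod_cast Nat.choose_pos (by omega)
    have hUD : U ≤ (m + 1) * D := by
      have h := Nat.choose_succ_right_eq m c
      have : m.choose (c + 1) ≤ (m + 1) * m.choose c := by nlinarith [Nat.sub_le m c]
      simp only [U, D]; exact_mod_cast this
    have hlink := sum_degree_mul_sub_sq_le_of_links (U := U) hD fun v hv => by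
      have h := ih (A.erase v) (link E v) (link_subset_powersetCard hE v)
      rwa [card_link, card_erase_of_mem hv, hm, Nat.add_sub_cancel] at h
    have hvar := card_mul_sum_degree_sq_sub_sq_le hE
    rw [hm, Nat.add_sub_cancel] at hvar
    have hsum : (∑ v ∈ A, (degree E v : ℝ)) = (c + 1) * #E := by
      exact_mod_cast sum_degree hE
    have hρ : (#E : ℝ) / (m + 1).choose (c + 1) = (∑ v ∈ A, (degree E v : ℝ)) / ((m + 1) * D) := by
      have h := congrArg (Nat.cast (R := ℝ)) (Nat.add_one_mul_choose_eq m c)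
      push_cast at h
      rw [hsum, div_eq_div_iff (by exact_mod_cast (Nat.choose_pos (by omega)).ne') (by positivity)]
      linear_combination (#E : ℝ) * h
    have hC : ((m + 1).choose (c + 1 + 1) : ℝ) = (m + 1) * U / (c + 2) := by
      have h := congrArg (Nat.cast (R := ℝ)) (Nat.add_one_mul_choose_eq m (c + 1))
      push_cast at h
      rw [eq_div_iff (by positivity)]
      linear_combination -h
    rw [hm, hρ, hC]
    push_cast at hvar ⊢
    exact density_bound_of_link_and_variance (by positivity) hD (boundary_nonneg _ _ _)
      (by positivity) (by positivity) hUD hlink hvar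

end UniformHypergraph

theorem stmt4_general (r : ℕ) (α : ℝ) :
    ∃ n₀ : ℕ, ∀ (V : Type) [Fintype V] [DecidableEq V] (n : ℕ),
      Fintype.card V = n → n₀ ≤ n →
      ∀ E : Finset (Finset V), (∀ e ∈ E, e.card = r) →
      α ≤ (E.card : ℝ) / (n.choose r : ℝ) → (E.card : ℝ) / (n.choose r : ℝ) ≤ 1 - α →
      α * (1 - α) * (n.choose (r + 1) : ℝ) ≤
        (1 / 2 : ℝ) * ∑ p ∈ (Finset.univ : Finset V).offDiag,
          (((Finset.univ.powersetCard (r + 1)).filter (fun S =>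
            p.1 ∈ S ∧ p.2 ∈ S ∧ ¬ ((S.erase p.1 ∈ E) ↔ (S.erase p.2 ∈ E)))).card : ℝ) := by
  refine ⟨0, fun V _ _ n hn _ E hE hlo hhi => ?_⟩
  have hbound := UniformHypergraph.density_mul_choose_le_boundary r univ E
    fun e he => mem_powersetCard.mpr ⟨subset_univ e, hE e he⟩
  rw [card_univ, hn] at hbound
  rw [UniformHypergraph.sum_offDiag_card_eq_two_mul_boundary]
  set ρ := (#E : ℝ) / n.choose r
  have hαρ : α * (1 - α) ≤ ρ * (1 - ρ) := by
    nlinarith [mul_nonneg (sub_nonneg.mpr hlo) (sub_nonneg.mpr hhi)]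
  nlinarith [mul_le_mul_of_nonneg_right hαρ (Nat.cast_nonneg (α := ℝ) (n.choose (r + 1)))]

/-- For an `r`-uniform hypergraph `F` of edge density `ρ ∈ [α, 1-α]` on sufficiently
many vertices, the sum of `|D_F(v,v')|` over unordered pairs `{v,v'}` (here expressed
as half the sum over ordered pairs of distinct vertices) is at least
`α(1-α) * (n choose (r+1))`. Here `D_F(u,v)` is the family of `(r+1)`-sets `S`
containing `u, v` such that exactly one of `S - u`, `S - v` is an edge. -/
theorem stmt4 (r : ℕ) (hr : 1 ≤ r) (α : ℝ) (hα : 0 < α) :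
    ∃ n₀ : ℕ, ∀ (V : Type) [Fintype V] [DecidableEq V] (n : ℕ),
      Fintype.card V = n → n₀ ≤ n →
      ∀ E : Finset (Finset V), (∀ e ∈ E, e.card = r) →
      α ≤ (E.card : ℝ) / (n.choose r : ℝ) → (E.card : ℝ) / (n.choose r : ℝ) ≤ 1 - α →
      α * (1 - α) * (n.choose (r + 1) : ℝ) ≤
        (1 / 2 : ℝ) * ∑ p ∈ (Finset.univ : Finset V).offDiag,
          (((Finset.univ.powersetCard (r + 1)).filter (fun S =>
            p.1 ∈ S ∧ p.2 ∈ S ∧ ¬ ((S.erase p.1 ∈ E) ↔ (S.erase p.2 ∈ E)))).card : ℝ) :=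
  stmt4_general r α
end

section
/- For every $r \ge 1$ and $\alpha > 0$ there exists $n_0$ such that for every $r$-uniform hypergraph $F = (V,E)$ on $n \ge n_0$ vertices with edge density $\rho = |E|/\binom{n}{r} \in [\alpha, 1-\alpha]$, there exist two distinct vertices $v, v' \in V$ with $|D_F(v,v')| \ge \alpha(1-\alpha) n^{r-1}/(r+1)!$. -/
/-!
At most `(r² / n) C(n,r)²` pairs `(A, B)` of `r`-sets meet, so at least
`(α(1-α) - r²/n) C(n,r)²` pairs with `A ∈ E`, `B ∉ E` are disjoint. List such a pair as an
injective sequence `x₀, …, x_{2r-1}` with `A = {x₀, …, x_{r-1}}` and `B = {x_r, …, x_{2r-1}}`.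
Sliding the window `{x_i, …, x_{i+r-1}}` one step at a time turns `A` into `B`, so at some step
`i` the window leaves `E`, and then `{x_i, …, x_{i+r}}` lies in `D(x_{i+r}, x_i)`. Such a set
together with the step determines the sequence up to the `(r-1)!` orderings of its middle and
`n^(r-1)` choices outside it, while every disjoint pair has `r!²` sequences. Hence
`∑_{v ≠ v'} |D(v, v')| ≳ α(1-α) n^(r+1) / r!`, and averaging over the `n²` ordered pairs wins a
factor `r + 1 ≥ 2` over the claim, which absorbs the lower order terms once `n ≥ 16 r² / α`.
-/

open Finset Nat

theorem Fin.card_filter_val_mem {m : ℕ} {s : Finset ℕ} (hs : ∀ a ∈ s, a < m) :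
    #{j : Fin m | (j : ℕ) ∈ s} = #s := by
  rw [← card_map Fin.valEmbedding]
  congr 1
  ext a
  simp only [mem_map, mem_filter, mem_univ, true_and, Fin.valEmbedding_apply]
  exact ⟨fun ⟨j, hj, hja⟩ => hja ▸ hj, fun ha => ⟨⟨a, hs a ha⟩, ha, rfl⟩⟩

theorem Fin.card_filter_val_notMem {m : ℕ} {s : Finset ℕ} (hs : ∀ a ∈ s, a < m) :
    #{j : Fin m | (j : ℕ) ∉ s} = m - #s := by
  have := card_filter_add_card_filter_not (s := (univ : Finset (Fin m))) (fun j => (j : ℕ) ∈ s)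
  rw [Finset.card_univ, Fintype.card_fin, Fin.card_filter_val_mem hs] at this
  omega

theorem card_embeddings_le_of_determined {ι V : Type*} [Fintype ι] [DecidableEq ι] [Fintype V]
    [DecidableEq V] (P : Finset (ι ↪ V)) (I O : Finset ι) (S : Finset V)
    (hmaps : ∀ x ∈ P, ∀ j ∈ I, x j ∈ S)
    (hdet : ∀ x ∈ P, ∀ y ∈ P, (∀ j ∈ I, x j = y j) → (∀ j ∈ O, x j = y j) → x = y) :
    #P ≤ (#S).descFactorial #I * Fintype.card V ^ #O := by
  let restrict : P → (I ↪ S) × (O → V) := fun x =>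
    (⟨fun j => ⟨x.1 j, hmaps x x.2 j j.2⟩,
      fun j k h => Subtype.ext (x.1.injective (congrArg Subtype.val h))⟩, fun j => x.1 j)
  have hinj : Function.Injective restrict := by
    rintro ⟨x, hx⟩ ⟨y, hy⟩ h
    simp only [restrict, Prod.mk.injEq] at h
    refine Subtype.ext (hdet x hx y hy (fun j hj => ?_) (fun j hj => congrFun h.2 ⟨j, hj⟩))
    exact congrArg Subtype.val (DFunLike.congr_fun h.1 ⟨j, hj⟩)
  simpa [Fintype.card_embedding_eq] using Fintype.card_le_of_injective restrict hinj

theorem Nat.exists_lt_and_not_succ_of_not {p : ℕ → Prop} {n : ℕ} (h0 : p 0) (hn : ¬ p n) :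
    ∃ i < n, p i ∧ ¬ p (i + 1) := by
  induction n with
  | zero => exact absurd h0 hn
  | succ n ih =>
    by_cases hpn : p n
    · exact ⟨n, lt_add_one n, hpn, hn⟩
    · obtain ⟨i, hi, h⟩ := ih hpn
      exact ⟨i, by omega, h⟩

theorem mul_one_sub_mul_sq_le_mul_sub {α a N : ℝ} (hN : 0 < N) (hlo : α ≤ a / N)
    (hhi : a / N ≤ 1 - α) : α * (1 - α) * N ^ 2 ≤ a * (N - a) := by
  rw [le_div_iff₀ hN] at hlo
  rw [div_le_iff₀ hN] at hhi
  nlinarith [mul_nonneg (sub_nonneg.mpr hlo) (sub_nonneg.mpr hhi)]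

theorem sub_pow_le_factorial_mul_choose {n r : ℕ} (hrn : r ≤ n) :
    ((n : ℝ) - r) ^ r ≤ r ! * n.choose r := by
  have h := (Nat.pow_sub_le_descFactorial n r).trans_eq
    (Nat.descFactorial_eq_factorial_mul_choose n r)
  calc ((n : ℝ) - r) ^ r ≤ ((n + 1 - r : ℕ) : ℝ) ^ r := by
        gcongr
        · linarith [(by exact_mod_cast hrn : (r : ℝ) ≤ n)]
        · rw [Nat.cast_sub (by omega)]; push_cast; linarith
    _ ≤ r ! * n.choose r := by exact_mod_cast h

theorem mul_pow_le_succ_mul_sub_pow {r : ℕ} (hr : 1 ≤ r) {s n : ℝ} (hs : 0 < s) (hs1 : s ≤ 1)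
    (hn : 8 * r ^ 2 ≤ s * n) :
    s * n ^ (2 * r) ≤ (r + 1) * ((s - r ^ 2 / n) * (n - r) ^ (2 * r)) := by
  have hr1 : (1 : ℝ) ≤ r := by exact_mod_cast hr
  have hn0 : 0 < n := by nlinarith
  have ht : r ^ 2 / n ≤ s / 8 := by rw [div_le_iff₀ hn0]; linarith
  have hrn : (r : ℝ) / n ≤ 1 := by rw [div_le_one hn0]; nlinarith
  have hbernoulli : n ^ (2 * r) * (1 - 2 * (r ^ 2 / n)) ≤ (n - r) ^ (2 * r) := by
    have h := one_add_mul_le_pow (a := -((r : ℝ) / n)) (by linarith) (2 * r)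
    have hsplit : (n - r) ^ (2 * r) = n ^ (2 * r) * (1 + -((r : ℝ) / n)) ^ (2 * r) := by
      rw [← mul_pow]; congr 1; field_simp; ring
    rw [hsplit]
    refine mul_le_mul_of_nonneg_left (le_trans (le_of_eq ?_) h) (by positivity)
    push_cast; field_simp; ring
  have hkey : s ≤ (r + 1) * ((s - r ^ 2 / n) * (1 - 2 * (r ^ 2 / n))) := by
    -- the two factors are at least `7s/8` and `3/4`, and `2 · 7/8 · 3/4 > 1`
    have h1 : 0 ≤ s - r ^ 2 / n := by nlinarith
    nlinarith [mul_le_mul (by linarith : 7 * s / 8 ≤ s - r ^ 2 / n)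
      (by nlinarith : (3 : ℝ) / 4 ≤ 1 - 2 * (r ^ 2 / n)) (by norm_num) h1]
  calc s * n ^ (2 * r) ≤ (r + 1) * ((s - r ^ 2 / n) * (1 - 2 * (r ^ 2 / n))) * n ^ (2 * r) :=
        mul_le_mul_of_nonneg_right hkey (by positivity)
    _ = (r + 1) * ((s - r ^ 2 / n) * (n ^ (2 * r) * (1 - 2 * (r ^ 2 / n)))) := by ring
    _ ≤ _ := by
        gcongr
        nlinarith

section Window

variable {V : Type*} {m : ℕ}

def window (x : Fin m ↪ V) (s : Finset ℕ) : Finset V :=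
  ({j : Fin m | (j : ℕ) ∈ s} : Finset (Fin m)).map x

theorem mem_window {x : Fin m ↪ V} {s : Finset ℕ} {v : V} :
    v ∈ window x s ↔ ∃ j : Fin m, (j : ℕ) ∈ s ∧ x j = v := by
  simp [window]

theorem apply_mem_window {x : Fin m ↪ V} {s : Finset ℕ} {j : Fin m} :
    x j ∈ window x s ↔ (j : ℕ) ∈ s := by
  simp [window]

theorem card_window (x : Fin m ↪ V) {s : Finset ℕ} (hs : ∀ a ∈ s, a < m) :
    #(window x s) = #s := by
  rw [window, card_map, Fin.card_filter_val_mem hs]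

theorem window_erase [DecidableEq V] (x : Fin m ↪ V) (s : Finset ℕ) (j : Fin m) :
    (window x s).erase (x j) = window x (s.erase j) := by
  rw [window, ← map_erase, window]
  congr 1
  ext k
  simp [Fin.val_ne_iff]

theorem disjoint_window (x : Fin m ↪ V) {s t : Finset ℕ} (h : Disjoint s t) :
    Disjoint (window x s) (window x t) := by
  rw [window, window, disjoint_map, disjoint_filter]
  exact fun _ _ hs ht => disjoint_left.mp h hs ht

theorem window_append_left {n : ℕ} {x : Fin m ↪ V} {y : Fin n ↪ V}
    (h : Disjoint (Set.range x) (Set.range y)) :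
    window (Fin.Embedding.append h) (Ico 0 m) = univ.map x := by
  ext v
  simp only [mem_window, mem_map, mem_univ, true_and, mem_Ico, Fin.Embedding.coe_append]
  constructor
  · rintro ⟨j, hj, rfl⟩
    induction j using Fin.addCases with
    | left k => exact ⟨k, (Fin.append_left _ _ k).symm⟩
    | right k => simp at hj
  · rintro ⟨k, rfl⟩
    exact ⟨Fin.castAdd n k, by simp, Fin.append_left _ _ k⟩

theorem window_append_right {n : ℕ} {x : Fin m ↪ V} {y : Fin n ↪ V}
    (h : Disjoint (Set.range x) (Set.range y)) :
    window (Fin.Embedding.append h) (Ico m (m + n)) = univ.map y := by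
  ext v
  simp only [mem_window, mem_map, mem_univ, true_and, mem_Ico, Fin.Embedding.coe_append]
  constructor
  · rintro ⟨j, hj, rfl⟩
    induction j using Fin.addCases with
    | left k => simp at hj; omega
    | right k => exact ⟨k, (Fin.append_right _ _ k).symm⟩
  · rintro ⟨k, rfl⟩
    exact ⟨Fin.natAdd m k, by simp, Fin.append_right _ _ k⟩

end Window

section Hypergraph

variable {V : Type*} [Fintype V] [DecidableEq V] {r : ℕ} {E : Finset (Finset V)}

/-- The family `D_F(v, v')`. -/
def switchingSets (r : ℕ) (E : Finset (Finset V)) (v v' : V) : Finset (Finset V) :=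
  {S ∈ powersetCard (r + 1) univ | v ∈ S ∧ v' ∈ S ∧ ¬ ((S.erase v ∈ E) ↔ (S.erase v' ∈ E))}

def switchingSum (r : ℕ) (E : Finset (Finset V)) : ℕ :=
  ∑ p ∈ (univ : Finset V).offDiag, #(switchingSets r E p.1 p.2)

noncomputable def windowExits (r : ℕ) (E : Finset (Finset V)) (i : ℕ) : Finset (Fin (r + r) ↪ V) :=
  {x | window x (Ico i (i + r)) ∈ E ∧ window x (Ico (i + 1) (i + 1 + r)) ∉ E}

noncomputable def crossingPaths (r : ℕ) (E : Finset (Finset V)) : Finset (Fin (r + r) ↪ V) :=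
  {x | window x (Ico 0 r) ∈ E ∧ window x (Ico r (r + r)) ∉ E}

def disjointPairs (r : ℕ) (E : Finset (Finset V)) : Finset (Finset V × Finset V) :=
  {p ∈ E ×ˢ (powersetCard r univ \ E) | Disjoint p.1 p.2}

theorem window_Icc_mem_switchingSets {i : ℕ} (hi : i < r) {x : Fin (r + r) ↪ V}
    (hx : x ∈ windowExits r E i) :
    window x (Icc i (i + r)) ∈ switchingSets r E (x ⟨i + r, by omega⟩) (x ⟨i, by omega⟩) := by
  have herase_last : (window x (Icc i (i + r))).erase (x ⟨i + r, by omega⟩)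
      = window x (Ico i (i + r)) := by
    rw [window_erase]
    congr 1
    ext
    simp only [mem_erase, mem_Icc, mem_Ico]
    omega
  have herase_first : (window x (Icc i (i + r))).erase (x ⟨i, by omega⟩)
      = window x (Ico (i + 1) (i + 1 + r)) := by
    rw [window_erase]
    congr 1
    ext
    simp only [mem_erase, mem_Icc, mem_Ico]
    omega
  have hcard : #(window x (Icc i (i + r))) = r + 1 := by
    rw [card_window x (fun a ha => by simp only [mem_Icc] at ha; omega), Nat.card_Icc]
    omega
  simp only [windowExits, mem_filter, mem_univ, true_and] at hx
  simp only [switchingSets, mem_filter, mem_powersetCard_univ, apply_mem_window, mem_Icc,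
    herase_last, herase_first]
  exact ⟨hcard, by omega, by omega, by tauto⟩

theorem card_window_Icc_eq_le {i : ℕ} (hi : i < r) {v v' : V} (hvv' : v ≠ v') {S : Finset V}
    (hS : #S = r + 1) (hvS : v ∈ S) (hv'S : v' ∈ S) :
    #{x : Fin (r + r) ↪ V | x ⟨i + r, by omega⟩ = v ∧ x ⟨i, by omega⟩ = v' ∧
      window x (Icc i (i + r)) = S} ≤ (r - 1)! * Fintype.card V ^ (r - 1) := by
  set P : Finset (Fin (r + r) ↪ V) := {x | x ⟨i + r, by omega⟩ = v ∧ x ⟨i, by omega⟩ = v' ∧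
    window x (Icc i (i + r)) = S}
  set I : Finset (Fin (r + r)) := {j | (j : ℕ) ∈ Ioo i (i + r)}
  set O : Finset (Fin (r + r)) := {j | (j : ℕ) ∉ Icc i (i + r)}
  have hmaps : ∀ x ∈ P, ∀ j ∈ I, x j ∈ (S.erase v).erase v' := by
    intro x hx j hj
    simp only [P, mem_filter, mem_univ, true_and] at hx
    obtain ⟨rfl, rfl, rfl⟩ := hx
    simp only [I, mem_filter, mem_univ, true_and, mem_Ioo] at hj
    simp only [mem_erase, apply_mem_window, mem_Icc, x.injective.ne_iff, ne_eq, Fin.ext_iff]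
    omega
  have hdet : ∀ x ∈ P, ∀ y ∈ P, (∀ j ∈ I, x j = y j) → (∀ j ∈ O, x j = y j) → x = y := by
    intro x hx y hy hI hO
    simp only [P, mem_filter, mem_univ, true_and] at hx hy
    ext j
    by_cases hjI : (j : ℕ) ∈ Ioo i (i + r)
    · exact hI j (by simpa [I] using hjI)
    by_cases hjO : (j : ℕ) ∉ Icc i (i + r)
    · exact hO j (by simpa [O] using hjO)
    simp only [mem_Ioo, mem_Icc, not_not] at hjI hjO
    obtain hj | hj : j = ⟨i + r, by omega⟩ ∨ j = ⟨i, by omega⟩ := by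
      simp only [Fin.ext_iff]; omega
    · rw [hj, hx.1, hy.1]
    · rw [hj, hx.2.1, hy.2.1]
  refine (card_embeddings_le_of_determined P I O _ hmaps hdet).trans_eq ?_
  rw [card_erase_of_mem (mem_erase.mpr ⟨hvv'.symm, hv'S⟩), card_erase_of_mem hvS, hS,
    Fin.card_filter_val_mem (fun a ha => by simp only [mem_Ioo] at ha; omega),
    Fin.card_filter_val_notMem (fun a ha => by simp only [mem_Icc] at ha; omega),
    Nat.card_Ioo, Nat.card_Icc, show i + r - i - 1 = r - 1 by omega,
    show r + r - (i + r + 1 - i) = r - 1 by omega, show r + 1 - 1 - 1 = r - 1 by omega,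
    Nat.descFactorial_self]

theorem card_windowExits_le {i : ℕ} (hi : i < r) :
    #(windowExits r E i) ≤ (r - 1)! * Fintype.card V ^ (r - 1) * switchingSum r E := by
  rw [switchingSum, ← card_sigma]
  refine card_le_mul_card_image_of_maps_to (f := fun x =>
    ⟨(x ⟨i + r, by omega⟩, x ⟨i, by omega⟩), window x (Icc i (i + r))⟩) (fun x hx => ?_) _ ?_
  · rw [mem_sigma, mem_offDiag]
    exact ⟨⟨mem_univ _, mem_univ _, x.injective.ne (by simp only [ne_eq, Fin.ext_iff]; omega)⟩,
      window_Icc_mem_switchingSets hi hx⟩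
  · rintro ⟨⟨v, v'⟩, S⟩ hS
    simp only [mem_sigma, mem_offDiag, switchingSets, mem_filter, mem_powersetCard_univ] at hS
    obtain ⟨⟨-, -, hvv'⟩, hSr, hvS, hv'S, -⟩ := hS
    refine (card_le_card fun x hx => ?_).trans (card_window_Icc_eq_le hi hvv' hSr hvS hv'S)
    simp only [mem_filter, Sigma.mk.inj_iff, Prod.mk.injEq, heq_eq_eq] at hx
    simp only [mem_filter, mem_univ, true_and]
    exact ⟨hx.2.1.1, hx.2.1.2, hx.2.2⟩

theorem card_crossingPaths_le :
    #(crossingPaths r E) ≤ r * ((r - 1)! * Fintype.card V ^ (r - 1) * switchingSum r E) := by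
  calc #(crossingPaths r E) ≤ #((range r).biUnion (windowExits r E)) := by
        refine card_le_card fun x hx => ?_
        simp only [crossingPaths, mem_filter, mem_univ, true_and] at hx
        obtain ⟨i, hi, hexit⟩ := Nat.exists_lt_and_not_succ_of_not
          (p := fun i => window x (Ico i (i + r)) ∈ E) (by simpa using hx.1) hx.2
        simp only [mem_biUnion, mem_range, windowExits, mem_filter, mem_univ, true_and]
        exact ⟨i, hi, hexit⟩
    _ ≤ ∑ i ∈ range r, #(windowExits r E i) := card_biUnion_le
    _ ≤ ∑ _i ∈ range r, (r - 1)! * Fintype.card V ^ (r - 1) * switchingSum r E :=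
        sum_le_sum fun i hi => card_windowExits_le (mem_range.mp hi)
    _ = _ := by rw [sum_const, card_range, smul_eq_mul]

theorem factorial_mul_factorial_le_card_window_eq {A B : Finset V} (hA : #A = r) (hB : #B = r)
    (hAB : Disjoint A B) :
    r ! * r ! ≤ #{x : Fin (r + r) ↪ V | window x (Ico 0 r) = A ∧ window x (Ico r (r + r)) = B} := by
  let toV {C : Finset V} (σ : Fin r ≃ C) : Fin r ↪ V :=
    σ.toEmbedding.trans (Function.Embedding.subtype _)
  have hmap {C : Finset V} (σ : Fin r ≃ C) : univ.map (toV σ) = C := by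
    rw [← map_map, map_univ_equiv, univ_eq_attach, attach_map_val]
  have hdisj (p : (Fin r ≃ A) × (Fin r ≃ B)) :
      Disjoint (Set.range (toV p.1)) (Set.range (toV p.2)) := by
    rw [Set.disjoint_left]
    rintro _ ⟨k, rfl⟩ ⟨l, hl⟩
    have hl' : (p.2 l : V) = p.1 k := hl
    exact disjoint_left.mp hAB (p.1 k).2 (hl' ▸ (p.2 l).2)
  have hinj : Set.InjOn (fun p => Fin.Embedding.append (hdisj p))
      ((univ : Finset ((Fin r ≃ A) × (Fin r ≃ B))) : Set _) := by
    rintro ⟨σ, τ⟩ - ⟨σ', τ'⟩ - h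
    simp only [Function.Embedding.ext_iff, Fin.Embedding.coe_append] at h
    refine Prod.ext (Equiv.ext fun k => Subtype.ext ?_) (Equiv.ext fun k => Subtype.ext ?_)
    · have hk := h (Fin.castAdd r k)
      rw [Fin.append_left, Fin.append_left] at hk
      exact hk
    · have hk := h (Fin.natAdd r k)
      rw [Fin.append_right, Fin.append_right] at hk
      exact hk
  calc r ! * r ! = #(univ : Finset ((Fin r ≃ A) × (Fin r ≃ B))) := by
        rw [Finset.card_univ, Fintype.card_prod, Fintype.card_equiv (equivFinOfCardEq hA).symm,
          Fintype.card_equiv (equivFinOfCardEq hB).symm, Fintype.card_fin]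
    _ ≤ _ := card_le_card_of_injOn _ (fun p _ => by
        rw [coe_filter]
        exact ⟨mem_univ _, window_append_left _ |>.trans (hmap _),
          window_append_right _ |>.trans (hmap _)⟩) hinj

theorem factorial_mul_factorial_mul_card_disjointPairs_le (hE : ∀ e ∈ E, #e = r) :
    r ! * r ! * #(disjointPairs r E) ≤ #(crossingPaths r E) := by
  refine mul_card_image_le_card_of_maps_to
    (f := fun x => (window x (Ico 0 r), window x (Ico r (r + r)))) (fun x hx => ?_) _
    fun p hp => ?_
  · simp only [crossingPaths, mem_filter, mem_univ, true_and] at hx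
    simp only [disjointPairs, mem_filter, mem_product, mem_sdiff, mem_powersetCard_univ]
    refine ⟨⟨hx.1, ?_, hx.2⟩, disjoint_window x (Ico_disjoint_Ico_consecutive 0 r (r + r))⟩
    rw [card_window x (fun a ha => (mem_Ico.mp ha).2), Nat.card_Ico, Nat.add_sub_cancel]
  · simp only [disjointPairs, mem_filter, mem_product, mem_sdiff, mem_powersetCard_univ] at hp
    refine (factorial_mul_factorial_le_card_window_eq (hE _ hp.1.1) hp.1.2.1 hp.2).trans
      (card_le_card fun x hx => ?_)
    simp only [mem_filter, mem_univ, true_and] at hx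
    simp only [crossingPaths, mem_filter, mem_univ, hx.1, hx.2, hp.1.1, hp.1.2.2,
      not_false_eq_true, and_self]

theorem card_disjointPairs_mul_factorial_le (hE : ∀ e ∈ E, #e = r) :
    #(disjointPairs r E) * r ! ≤ Fintype.card V ^ (r - 1) * switchingSum r E := by
  have hfact : r * (r - 1)! ≤ r ! := by
    rcases r with _ | r
    · simp
    · exact (Nat.mul_factorial_pred (Nat.succ_ne_zero r)).le
  refine Nat.le_of_mul_le_mul_left ?_ (factorial_pos r)
  calc r ! * (#(disjointPairs r E) * r !) = r ! * r ! * #(disjointPairs r E) := by ring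
    _ ≤ r * ((r - 1)! * Fintype.card V ^ (r - 1) * switchingSum r E) :=
        (factorial_mul_factorial_mul_card_disjointPairs_le hE).trans card_crossingPaths_le
    _ = r * (r - 1)! * (Fintype.card V ^ (r - 1) * switchingSum r E) := by ring
    _ ≤ _ := Nat.mul_le_mul_right _ hfact

theorem card_filter_not_disjoint_le (hr : 1 ≤ r) {A : Finset V} (hA : #A = r) :
    #{B ∈ powersetCard r univ | ¬ Disjoint A B} ≤ r * (Fintype.card V - 1).choose (r - 1) := by
  calc #{B ∈ powersetCard r univ | ¬ Disjoint A B}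
      ≤ #(A.biUnion fun a => {B ∈ powersetCard r univ | {a} ⊆ B}) := by
        refine card_le_card fun B hB => ?_
        rw [mem_filter, not_disjoint_iff] at hB
        obtain ⟨hBr, a, haA, haB⟩ := hB
        exact mem_biUnion.mpr ⟨a, haA, mem_filter.mpr ⟨hBr, singleton_subset_iff.mpr haB⟩⟩
    _ ≤ ∑ a ∈ A, #{B ∈ powersetCard r univ | {a} ⊆ B} := card_biUnion_le
    _ = ∑ _a ∈ A, (Fintype.card V - 1).choose (r - 1) := sum_congr rfl fun a _ => by
        rw [card_filter_powersetCard_subset _ _ _ (subset_univ _) (by rwa [card_singleton]),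
          card_singleton, Finset.card_univ]
    _ = r * (Fintype.card V - 1).choose (r - 1) := by rw [sum_const, hA, smul_eq_mul]

theorem card_mul_choose_sub_card_le (hr : 1 ≤ r) (hE : ∀ e ∈ E, #e = r) :
    #E * ((Fintype.card V).choose r - #E) ≤
      #(disjointPairs r E) + #E * (r * (Fintype.card V - 1).choose (r - 1)) := by
  have hEK : E ⊆ powersetCard r univ := fun e he => mem_powersetCard_univ.mpr (hE e he)
  have hcompl : #(powersetCard r univ \ E) = (Fintype.card V).choose r - #E := by
    rw [card_sdiff_of_subset hEK, card_powersetCard, Finset.card_univ]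
  rw [← hcompl, ← card_product, ← card_filter_add_card_filter_not (fun p : Finset V × Finset V =>
      Disjoint p.1 p.2), disjointPairs, mul_comm #E]
  refine Nat.add_le_add_left (card_le_mul_card_image_of_maps_to (f := Prod.fst)
    (fun p hp => (mem_product.mp (mem_filter.mp hp).1).1) _ fun A hA => ?_) _
  refine (card_le_card_of_injOn Prod.snd (fun p hp => ?_) fun p hp q hq hpq => ?_).trans
    (card_filter_not_disjoint_le hr (hE A hA))
  · simp only [coe_filter, mem_filter, mem_product, mem_sdiff, Set.mem_ofPred_eq] at hp ⊢
    obtain ⟨⟨⟨-, hp2, -⟩, hdisj⟩, rfl⟩ := hp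
    exact ⟨hp2, hdisj⟩
  · simp only [coe_filter, Set.mem_ofPred_eq] at hp hq
    exact Prod.ext (hp.2.trans hq.2.symm) hpq

theorem sub_mul_choose_sq_le_card_disjointPairs (hr : 1 ≤ r) (hE : ∀ e ∈ E, #e = r)
    (hrn : r ≤ Fintype.card V) {s : ℝ}
    (hdens : s * (Fintype.card V).choose r ^ 2 ≤ #E * ((Fintype.card V).choose r - #E)) :
    (s - r ^ 2 / Fintype.card V) * (Fintype.card V).choose r ^ 2 ≤ #(disjointPairs r E) := by
  set n := Fintype.card V
  set N := n.choose r
  have hn0 : (0 : ℝ) < n := by exact_mod_cast hr.trans hrn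
  have hEN : #E ≤ N :=
    calc #E ≤ #(powersetCard r (univ : Finset V)) :=
          card_le_card fun e he => mem_powersetCard_univ.mpr (hE e he)
      _ = N := by rw [card_powersetCard, Finset.card_univ]
  have hcorr : (#E : ℝ) * (N - #E) ≤ #(disjointPairs r E) + #E * (r * (n - 1).choose (r - 1)) := by
    have h : ((#E * (N - #E) : ℕ) : ℝ) ≤
        ((#(disjointPairs r E) + #E * (r * (n - 1).choose (r - 1)) : ℕ) : ℝ) := by
      exact_mod_cast card_mul_choose_sub_card_le hr hE
    push_cast [Nat.cast_sub hEN] at h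
    exact h
  have hchoose : (n : ℝ) * (n - 1).choose (r - 1) = r * N := by
    have h := Nat.add_one_mul_choose_eq (n - 1) (r - 1)
    rw [Nat.sub_add_cancel (hr.trans hrn), Nat.sub_add_cancel hr] at h
    rw [mul_comm (r : ℝ)]
    exact_mod_cast h
  have hloss : (#E : ℝ) * (r * (n - 1).choose (r - 1)) ≤ r ^ 2 / n * N ^ 2 := by
    rw [div_mul_eq_mul_div, le_div_iff₀ hn0]
    calc (#E : ℝ) * (r * (n - 1).choose (r - 1)) * n = r ^ 2 * (#E * N) := by
          rw [mul_assoc, mul_assoc, mul_comm _ (n : ℝ), hchoose]; ring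
      _ ≤ r ^ 2 * N ^ 2 := by
          rw [sq (N : ℝ)]
          gcongr
  nlinarith

theorem mul_pow_le_mul_switchingSum (hr : 1 ≤ r) (hE : ∀ e ∈ E, #e = r) {s : ℝ}
    (hs : 0 < s) (hs1 : s ≤ 1)
    (hdens : s * (Fintype.card V).choose r ^ 2 ≤ #E * ((Fintype.card V).choose r - #E))
    (hn : 8 * r ^ 2 ≤ s * Fintype.card V) :
    s * (Fintype.card V : ℝ) ^ (2 * r) ≤
      (r + 1)! * (Fintype.card V : ℝ) ^ (r - 1) * switchingSum r E := by
  set n := Fintype.card V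
  set X := #(disjointPairs r E)
  have hr1 : (1 : ℝ) ≤ r := by exact_mod_cast hr
  have hrn' : (r : ℝ) ≤ n := by nlinarith
  have hrn : r ≤ n := by exact_mod_cast hrn'
  have hslack : 0 ≤ s - r ^ 2 / n := by
    rw [sub_nonneg, div_le_iff₀ (by linarith)]; nlinarith
  have hpath : (X : ℝ) * r ! ≤ n ^ (r - 1) * switchingSum r E := by
    exact_mod_cast card_disjointPairs_mul_factorial_le hE
  calc s * (n : ℝ) ^ (2 * r) ≤ (r + 1) * ((s - r ^ 2 / n) * (n - r) ^ (2 * r)) :=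
        mul_pow_le_succ_mul_sub_pow hr hs hs1 hn
    _ ≤ (r + 1) * ((s - r ^ 2 / n) * ((r ! : ℝ) * n.choose r) ^ 2) := by
        rw [pow_mul']
        gcongr
        exact sub_pow_le_factorial_mul_choose hrn
    _ = (r + 1) * r ! * (r ! * ((s - r ^ 2 / n) * n.choose r ^ 2)) := by ring
    _ ≤ (r + 1) * r ! * (X * r !) := by
        rw [mul_comm (X : ℝ)]
        gcongr
        exact sub_mul_choose_sq_le_card_disjointPairs hr hE hrn hdens
    _ ≤ (r + 1) * r ! * (n ^ (r - 1) * switchingSum r E) := by gcongr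
    _ = (r + 1)! * (n : ℝ) ^ (r - 1) * switchingSum r E := by
        push_cast [Nat.factorial_succ]; ring

theorem exists_le_card_switchingSets (hr : 1 ≤ r) (hE : ∀ e ∈ E, #e = r) {s : ℝ}
    (hs : 0 < s) (hs1 : s ≤ 1)
    (hdens : s * (Fintype.card V).choose r ^ 2 ≤ #E * ((Fintype.card V).choose r - #E))
    (hn : 8 * r ^ 2 ≤ s * Fintype.card V) :
    ∃ v v' : V, v ≠ v' ∧
      s * (Fintype.card V : ℝ) ^ (r - 1) / (r + 1)! ≤ #(switchingSets r E v v') := by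
  have hbound := mul_pow_le_mul_switchingSum hr hE hs hs1 hdens hn
  set n := Fintype.card V with hn_def
  have hn1 : (1 : ℝ) < n := by nlinarith [(by exact_mod_cast hr : (1 : ℝ) ≤ r)]
  obtain ⟨v, v', hvv'⟩ := Fintype.exists_pair_of_one_lt_card (by exact_mod_cast hn1)
  have hoff : (univ : Finset V).offDiag.Nonempty := ⟨(v, v'), by simpa using hvv'⟩
  have hpow : (n : ℝ) ^ (2 * r) = n ^ (r - 1) * (n ^ 2 * n ^ (r - 1)) := by
    rw [← pow_add, ← pow_add]; congr 1; omega
  have hoffDiag : ((n * n - n : ℕ) : ℝ) ≤ n ^ 2 := by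
    rw [Nat.cast_sub (Nat.le_mul_self n)]; push_cast; nlinarith
  have hsum : ∑ _p ∈ (univ : Finset V).offDiag, s * (n : ℝ) ^ (r - 1) / (r + 1)! ≤
      ∑ p ∈ (univ : Finset V).offDiag, (#(switchingSets r E p.1 p.2) : ℝ) := by
    rw [sum_const, offDiag_card, Finset.card_univ, ← hn_def, nsmul_eq_mul, ← Nat.cast_sum,
      ← switchingSum, mul_div_assoc', div_le_iff₀ (by positivity)]
    rw [hpow] at hbound
    have hpos : (0 : ℝ) < n ^ (r - 1) := by positivity
    nlinarith [mul_le_mul_of_nonneg_right hoffDiag (by positivity : (0 : ℝ) ≤ s * n ^ (r - 1))]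
  obtain ⟨p, hp, hle⟩ := exists_le_of_sum_le hoff hsum
  exact ⟨p.1, p.2, (mem_offDiag.mp hp).2.2, hle⟩

end Hypergraph

/-- For an `r`-uniform hypergraph `F` of edge density `ρ ∈ [α, 1-α]` on sufficiently
many vertices, there are two distinct vertices `v, v'` with
`|D_F(v,v')| ≥ α(1-α) n^(r-1) / (r+1)!`. -/
theorem stmt5 (r : ℕ) (hr : 1 ≤ r) (α : ℝ) (hα : 0 < α) :
    ∃ n₀ : ℕ, ∀ (V : Type) [Fintype V] [DecidableEq V] (n : ℕ),
      Fintype.card V = n → n₀ ≤ n →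
      ∀ E : Finset (Finset V), (∀ e ∈ E, e.card = r) →
      α ≤ (E.card : ℝ) / (n.choose r : ℝ) → (E.card : ℝ) / (n.choose r : ℝ) ≤ 1 - α →
      ∃ v v' : V, v ≠ v' ∧
        α * (1 - α) * (n : ℝ) ^ (r - 1) / (Nat.factorial (r + 1) : ℝ) ≤
          (((Finset.univ.powersetCard (r + 1)).filter (fun S =>
            v ∈ S ∧ v' ∈ S ∧ ¬ ((S.erase v ∈ E) ↔ (S.erase v' ∈ E)))).card : ℝ) := by
  refine ⟨⌈16 * r ^ 2 / α⌉₊, fun V _ _ n hn hn₀ E hE hlo hhi => ?_⟩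
  subst hn
  have hN : (0 : ℝ) < (Fintype.card V).choose r := by
    by_contra! h
    rw [le_antisymm h (Nat.cast_nonneg _), div_zero] at hlo
    linarith
  have hα2 : α ≤ 1 / 2 := by linarith [hlo.trans hhi]
  have hn : 16 * r ^ 2 ≤ α * Fintype.card V := by
    rw [← div_le_iff₀' hα]
    exact Nat.ceil_le.mp hn₀
  exact exists_le_card_switchingSets hr hE (by nlinarith) (by nlinarith)
    (mul_one_sub_mul_sq_le_mul_sub hN hlo hhi) (by nlinarith)
end

section
/- For every real $\rho \in [\alpha, 1-\alpha]$ with $0 < \alpha \le 1/2$ and integer $r \ge 1$, one has $\rho(1 - \rho^{1/r}) \ge \alpha(1-\alpha)/r$. -/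
/-- For `0 < α ≤ 1/2`, `r ≥ 1` and `ρ ∈ [α, 1-α]`, `ρ(1 - ρ^{1/r}) ≥ α(1-α)/r`. -/
theorem stmt11 (r : ℕ) (hr : 1 ≤ r) (α ρ : ℝ) (hα0 : 0 < α) (hα1 : α ≤ 1 / 2)
    (hρ1 : α ≤ ρ) (hρ2 : ρ ≤ 1 - α) :
    α * (1 - α) / r ≤ ρ * (1 - ρ ^ ((1 : ℝ) / r)) := by
  have hr0 : (0:ℝ) < r := by exact_mod_cast hr
  have hρ0 : 0 ≤ ρ := le_trans hα0.le hρ1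
  have hρle1 : ρ ≤ 1 := by linarith
  set y := ρ ^ ((1:ℝ)/r) with hy
  have hy0 : 0 ≤ y := Real.rpow_nonneg hρ0 _
  have hy1 : y ≤ 1 := Real.rpow_le_one hρ0 hρle1 (by positivity)
  have hyr : y ^ r = ρ := by
    rw [hy, one_div, Real.rpow_inv_natCast_pow hρ0 (by omega)]
  have bern : 1 + (r:ℝ) * (y - 1) ≤ (1 + (y-1)) ^ r := one_add_mul_le_pow (by linarith) r
  have h1 : 1 - ρ ≤ r * (1 - y) := by
    have : (1 + (y-1)) ^ r = ρ := by rw [show 1 + (y-1) = y by ring, hyr]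
    nlinarith [bern]
  have h2 : α * (1-α) ≤ ρ * (1-ρ) := by nlinarith
  rw [div_le_iff₀ hr0]
  nlinarith [mul_le_mul_of_nonneg_left h1 hρ0]
end

section
/- Let $V$ be an $n$-set with partitions $X_1, X_2$ of $\binom{V}{r}$ and $Y_1, Y_2$ of $\binom{V}{r'}$ as above, and fix a vertex $v_0 \in V$. Then for any distinct $v, v' \in V \setminus \{v_0\}$: $|D(v,v')| \le |D(v,v_0)| + |D(v',v_0)| + \binom{n-1}{r-2}$, where $D$ is defined via the coloring $\phi$ of $r$-sets. -/
/-!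
A set `S ∈ D(v,v')` containing `v₀` already lies in `D(v,v₀) ∪ D(v',v₀)`, since the colour of
`S - v₀` differs from one of the two distinct colours of `S - v`, `S - v'`. A set `S ∈ D(v,v')`
avoiding `v₀` is exchanged for `S - v' + v₀ ∈ D(v,v₀)` or `S - v + v₀ ∈ D(v',v₀)`: one of them
works because the colour of `S - v - v' + v₀` differs from one of the colours of `S - v`, `S - v'`.
The exchanged set remembers which of `v, v'` it lost, so `S` can be recovered from it, and
`|D(v,v')| ≤ |D(v,v₀) ∪ D(v',v₀)|`.
-/

section Discord

open Finset

variable {α : Type*} [DecidableEq α]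

theorem insert_erase_insert_erase {S : Finset α} {a x : α} (ha : a ∈ S) (hx : x ∉ S) :
    insert a ((insert x (S.erase a)).erase x) = S := by
  rw [erase_insert fun h => hx (mem_of_mem_erase h), insert_erase ha]

variable [Fintype α]

/-- The paper's `D(u,w)` for the colouring `S ↦ (S ∈ X)` of the `(k-1)`-sets. -/
def discord (X : Finset (Finset α)) (k : ℕ) (u w : α) : Finset (Finset α) :=
  (univ.powersetCard k).filter fun S => u ∈ S ∧ w ∈ S ∧ ¬ (S.erase u ∈ X ↔ S.erase w ∈ X)

variable {X : Finset (Finset α)} {k : ℕ} {S : Finset α} {a b u w x : α}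

theorem mem_discord :
    S ∈ discord X k u w ↔ #S = k ∧ u ∈ S ∧ w ∈ S ∧ ¬ (S.erase u ∈ X ↔ S.erase w ∈ X) := by
  simp only [discord, mem_filter, mem_powersetCard_univ]

theorem mem_discord_union_of_mem (hS : S ∈ discord X k u w) (hx : x ∈ S) :
    S ∈ discord X k u x ∪ discord X k w x := by
  obtain ⟨hcard, hu, hw, hcol⟩ := mem_discord.1 hS
  rw [mem_union, mem_discord, mem_discord]
  by_cases h : S.erase u ∈ X ↔ S.erase x ∈ X
  · exact .inr ⟨hcard, hw, hx, fun h' => hcol (h.trans h'.symm)⟩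
  · exact .inl ⟨hcard, hu, hx, h⟩

theorem insert_erase_mem_discord_iff (hS : S ∈ discord X k a b) (hab : a ≠ b) (hx : x ∉ S) :
    insert x (S.erase a) ∈ discord X k b x ↔
      ¬ (insert x ((S.erase a).erase b) ∈ X ↔ S.erase a ∈ X) := by
  obtain ⟨hcard, ha, hb, -⟩ := mem_discord.1 hS
  have hxa : x ∉ S.erase a := fun h => hx (mem_of_mem_erase h)
  have hxb : x ≠ b := fun h => hx (h ▸ hb)
  have hcard' : #(insert x (S.erase a)) = k := by
    rw [card_insert_of_notMem hxa, card_erase_add_one ha, hcard]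
  simp only [mem_discord, hcard', mem_insert_self, mem_insert, mem_erase, ne_eq, hab.symm, hb,
    erase_insert_of_ne hxb, erase_insert hxa, not_false_eq_true, true_and, and_true, or_true]

theorem insert_erase_mem_discord_or (hS : S ∈ discord X k u w) (huw : u ≠ w) (hx : x ∉ S) :
    insert x (S.erase w) ∈ discord X k u x ∨ insert x (S.erase u) ∈ discord X k w x := by
  have hcol := (mem_discord.1 hS).2.2.2
  have hS' : S ∈ discord X k w u := by
    obtain ⟨hcard, hu, hw, -⟩ := mem_discord.1 hS
    exact mem_discord.2 ⟨hcard, hw, hu, fun h => hcol h.symm⟩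
  rw [insert_erase_mem_discord_iff hS' huw.symm hx, insert_erase_mem_discord_iff hS huw hx,
    erase_right_comm]
  tauto

theorem card_discord_le_add (huw : u ≠ w) (hux : u ≠ x) (hwx : w ≠ x) :
    #(discord X k u w) ≤ #(discord X k u x) + #(discord X k w x) := by
  let exchange : Finset α → Finset α := fun S =>
    if x ∈ S then S
    else if insert x (S.erase w) ∈ discord X k u x then insert x (S.erase w)
    else insert x (S.erase u)
  let restore : Finset α → Finset α := fun T =>
    if u ∈ T ∧ w ∈ T then T
    else if u ∈ T then insert w (T.erase x)
    else insert u (T.erase x)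
  have maps : ∀ S ∈ discord X k u w, exchange S ∈ discord X k u x ∪ discord X k w x := by
    intro S hS
    by_cases hx : x ∈ S
    · simpa only [exchange, if_pos hx] using mem_discord_union_of_mem hS hx
    by_cases h : insert x (S.erase w) ∈ discord X k u x
    · simp only [exchange, if_neg hx, if_pos h, mem_union]
      exact .inl h
    · simp only [exchange, if_neg hx, if_neg h, mem_union]
      exact .inr ((insert_erase_mem_discord_or hS huw hx).resolve_left h)
  have inv : Set.LeftInvOn restore exchange (discord X k u w) := by
    intro S hS
    obtain ⟨-, hu, hw, -⟩ := mem_discord.1 (mem_coe.1 hS)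
    by_cases hx : x ∈ S
    · simp [exchange, restore, hx, hu, hw]
    by_cases h : insert x (S.erase w) ∈ discord X k u x
    · have hu' : u ∈ insert x (S.erase w) := mem_insert_of_mem (mem_erase.2 ⟨huw, hu⟩)
      have hw' : w ∉ insert x (S.erase w) := by simp [hwx]
      simp only [exchange, restore, if_neg hx, if_pos h, hu', hw', and_false, if_false, if_true]
      exact insert_erase_insert_erase hw hx
    · have hu' : u ∉ insert x (S.erase u) := by simp [hux]
      simp only [exchange, restore, if_neg hx, if_neg h, hu', false_and, if_false]
      exact insert_erase_insert_erase hu hx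
  calc #(discord X k u w) ≤ #(discord X k u x ∪ discord X k w x) :=
        card_le_card_of_injOn exchange maps inv.injOn
    _ ≤ #(discord X k u x) + #(discord X k w x) := card_union_le _ _

end Discord

theorem stmt19_general {V : Type*} [Fintype V] [DecidableEq V] (n r : ℕ)
    (X1 : Finset (Finset V))
    (v₀ v v' : V) (h1 : v ≠ v') (h2 : v ≠ v₀) (h3 : v' ≠ v₀) :
    ((Finset.univ.powersetCard (r + 1)).filter (fun S =>
        v ∈ S ∧ v' ∈ S ∧ ¬ ((S.erase v ∈ X1) ↔ (S.erase v' ∈ X1)))).card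
      ≤ ((Finset.univ.powersetCard (r + 1)).filter (fun S =>
          v ∈ S ∧ v₀ ∈ S ∧ ¬ ((S.erase v ∈ X1) ↔ (S.erase v₀ ∈ X1)))).card
        + ((Finset.univ.powersetCard (r + 1)).filter (fun S =>
          v' ∈ S ∧ v₀ ∈ S ∧ ¬ ((S.erase v' ∈ X1) ↔ (S.erase v₀ ∈ X1)))).card
        + (n - 1).choose (r - 2) :=
  (card_discord_le_add (X := X1) (k := r + 1) h1 h2 h3).trans (Nat.le_add_right _ _)

/-- Given a 2-coloring `X₁, X₂` of the `r`-subsets of an `n`-set and a fixed vertex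
`v₀`, for any distinct `v, v' ∈ V \ {v₀}` we have
`|D(v,v')| ≤ |D(v,v₀)| + |D(v',v₀)| + C(n-1, r-2)`, where `D(u,w)` is the family of
`(r+1)`-sets `S ∋ u, w` such that `S - u` and `S - w` receive different colors. -/
theorem stmt19 {V : Type*} [Fintype V] [DecidableEq V] (n r : ℕ)
    (hn : Fintype.card V = n) (hr : 1 ≤ r)
    (X1 X2 : Finset (Finset V)) (hX : X1 ∪ X2 = Finset.univ.powersetCard r)
    (hXd : Disjoint X1 X2)
    (v₀ v v' : V) (h1 : v ≠ v') (h2 : v ≠ v₀) (h3 : v' ≠ v₀) :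
    ((Finset.univ.powersetCard (r + 1)).filter (fun S =>
        v ∈ S ∧ v' ∈ S ∧ ¬ ((S.erase v ∈ X1) ↔ (S.erase v' ∈ X1)))).card
      ≤ ((Finset.univ.powersetCard (r + 1)).filter (fun S =>
          v ∈ S ∧ v₀ ∈ S ∧ ¬ ((S.erase v ∈ X1) ↔ (S.erase v₀ ∈ X1)))).card
        + ((Finset.univ.powersetCard (r + 1)).filter (fun S =>
          v' ∈ S ∧ v₀ ∈ S ∧ ¬ ((S.erase v' ∈ X1) ↔ (S.erase v₀ ∈ X1)))).card
        + (n - 1).choose (r - 2) :=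
  stmt19_general n r X1 v₀ v v' h1 h2 h3
end
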